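/- arXiv:2605.22458 — 10 statements merged into one kernel-verified Lean document; each statement's English description precedes it below -/
import Mathlib

section
/- Let F(k,r,q) = q^4 - r^4 + (4k/(k^2+1))·r^2 - 1. If F(k,r,q) = 0 and k^2 - 2k·r^2 + 1 ≠ 0, then F(k', q, r) = 0 where k' = ((k^2+1)·q^2 + (k^2-1)·r^2)/(k^2 - 2k·r^2 + 1). -/
def F (k r q : ℚ) : ℚ := q^4 - r^4 + (4*k/(k^2+1))*r^2 - 1

theorem stmt3 (k r q : ℚ) (h : F k r q = 0) (hd : k^2 - 2*k*r^2 + 1 ≠ 0) :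
    F (((k^2+1)*q^2 + (k^2-1)*r^2)/(k^2 - 2*k*r^2 + 1)) q r = 0 := by
  have hD : (k^2+1 : ℚ) ≠ 0 := by positivity
  unfold F at h ⊢
  field_simp at h
  set E := k^2 - 2*k*r^2 + 1 with hE
  set A := (k^2+1)*q^2 + (k^2-1)*r^2 with hA
  have key : (r^4-q^4-1)*(A^2+E^2) + 4*A*E*q^2 = 0 := by
    rw [hA, hE]
    linear_combination ((1-(q^2-r^2)^2) + k^2*(1-(q^2+r^2)^2)) * h
  have hAE : A^2 + E^2 ≠ 0 := by
    intro hz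
    have : E = 0 := by nlinarith [sq_nonneg A, sq_nonneg E]
    exact hd this
  have hk2 : ((A/E)^2 + 1 : ℚ) ≠ 0 := by positivity
  have hterm : 4*(A/E)/((A/E)^2+1)*q^2 = 4*A*E*q^2/(A^2+E^2) := by
    field_simp
  have hterm2 : 4*A*E*q^2/(A^2+E^2) = 1 - r^4 + q^4 := by
    rw [div_eq_iff hAE]
    linear_combination key
  rw [hterm, hterm2]
  ring
end

section
/- The triangle with integer side lengths 111^2 = 12321, 433^2 = 187489, and 197200 is a Heron triangle: the sides satisfy the triangle inequality and the quantity 16·A^2 = (a+b+c)(-a+b+c)(a-b+c)(a+b-c) is a perfect square of an even integer, so the area A is a positive integer. Moreover gcd(12321, 187489, 197200) = 1. -/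
theorem stmt6 :
    let a : ℤ := 12321
    let b : ℤ := 187489
    let c : ℤ := 197200
    a + b > c ∧ b + c > a ∧ a + c > b ∧
    (∃ A : ℤ, 0 < A ∧ (a+b+c)*(-a+b+c)*(a-b+c)*(a+b-c) = (4*A)^2) ∧
    Int.gcd a (Int.gcd b c) = 1 := by
  refine ⟨by norm_num, by norm_num, by norm_num, ⟨728910360, by norm_num, by norm_num⟩, by norm_num⟩
end

section
/- If k, r are rationals with (k^2+1)·r^2 = 4k and k > 0, then k = 1 and r^2 = 2, which is impossible; hence (k^2+1)·r^2 = 4k has no rational solutions with k > 0. -/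
theorem stmt8 : ¬ ∃ k r : ℚ, 0 < k ∧ (k^2 + 1) * r^2 = 4 * k := by
  rintro ⟨k, r, hk, heq⟩
  set a : ℤ := k.num with ha_def
  set b : ℤ := (k.den : ℤ) with hb_def
  have ha : 0 < a := Rat.num_pos.mpr hk
  have hb : 0 < b := Int.natCast_pos.mpr k.pos
  have hcop : IsCoprime a b := by
    rw [Int.isCoprime_iff_gcd_eq_one]
    exact k.reduced
  set s : ℤ := r.num with hs_def
  set t : ℤ := (r.den : ℤ) with ht_def
  have ht : 0 < t := Int.natCast_pos.mpr r.pos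
  have hst : IsCoprime s t := by
    rw [Int.isCoprime_iff_gcd_eq_one]
    exact r.reduced
  have hkq : (k : ℚ) = (a : ℚ) / (b : ℚ) := (Rat.num_div_den k).symm
  have hrq : (r : ℚ) = (s : ℚ) / (t : ℚ) := (Rat.num_div_den r).symm
  have hbq : (b : ℚ) ≠ 0 := by positivity
  have htq : (t : ℚ) ≠ 0 := by positivity
  -- integer equation
  have key : ((a:ℚ)^2 + b^2) * s^2 = 4 * a * b * t^2 := by
    rw [hkq, hrq] at heq
    field_simp at heq
    have hb2 : (b:ℚ) * (((a:ℚ)^2 + b^2) * s^2) = (b:ℚ) * (4 * a * b * t^2) := by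
      linear_combination (b:ℚ) * heq
    exact mul_left_cancel₀ hbq hb2
  have keyZ : (a^2 + b^2) * s^2 = 4 * a * b * t^2 := by exact_mod_cast key
  -- coprimality facts
  have hca : IsCoprime a (a^2 + b^2) := by
    have := (hcop.pow_right (n := 2)).add_mul_left_right a
    have e : b ^ 2 + a * a = a ^ 2 + b ^ 2 := by ring
    rwa [e] at this
  have hcb : IsCoprime b (a^2 + b^2) := by
    have := (hcop.symm.pow_right (n := 2)).add_mul_left_right b
    have e : a ^ 2 + b * b = a ^ 2 + b ^ 2 := by ring
    rwa [e] at this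
  have hcab : IsCoprime (a * b) (a^2 + b^2) := hca.mul_left hcb
  -- t^2 ∣ a^2 + b^2
  have hts : IsCoprime (t^2) (s^2) := (hst.symm.pow (m := 2) (n := 2))
  have ht2 : t^2 ∣ a^2 + b^2 := by
    have h1 : t^2 ∣ (a^2 + b^2) * s^2 := ⟨4 * a * b, by linarith [keyZ]⟩
    exact hts.dvd_of_dvd_mul_right h1
  obtain ⟨m, hm⟩ := ht2
  -- a^2+b^2 ∣ 4 t^2
  have hab4 : a^2 + b^2 ∣ 4 * t^2 := by
    have h1 : a^2 + b^2 ∣ (a * b) * (4 * t^2) := ⟨s^2, by linarith [keyZ]⟩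
    exact hcab.symm.dvd_of_dvd_mul_left h1
  have hm4 : m ∣ 4 := by
    have h2 : t^2 * m ∣ t^2 * 4 := by rw [← hm, mul_comm (t^2) 4]; exact hab4
    exact (mul_dvd_mul_iff_left (by positivity : t^2 ≠ 0)).mp h2
  have hmpos : 0 < m := by
    have habp : 0 < a^2 + b^2 := by positivity
    nlinarith [sq_nonneg t]
  have hms : m * s^2 = 4 * a * b := by
    have h3 : t^2 * (m * s^2) = t^2 * (4 * a * b) := by rw [hm] at keyZ; ring_nf at keyZ ⊢; linarith
    exact mul_left_cancel₀ (by positivity : t^2 ≠ 0) h3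
  -- helper to finish via FLT4
  have finish : ∀ c d : ℤ, a * b = c ^ 2 → a ^ 2 + b ^ 2 = d ^ 2 → False := by
    intro c d hc hd
    obtain ⟨u, hu⟩ := Int.sq_of_isCoprime hcop hc
    obtain ⟨w, hw⟩ := Int.sq_of_isCoprime hcop.symm (by rw [mul_comm] at hc; exact hc)
    have hau : a = u ^ 2 := by rcases hu with h | h; exact h; nlinarith [sq_nonneg u]
    have hbw : b = w ^ 2 := by rcases hw with h | h; exact h; nlinarith [sq_nonneg w]
    have hu0 : u ≠ 0 := by rintro rfl; simp at hau; omega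
    have hw0 : w ≠ 0 := by rintro rfl; simp at hbw; omega
    exact not_fermat_42 hu0 hw0 (by rw [hau, hbw] at hd; rw [← hd]; ring)
  have hm_le : m ≤ 4 := Int.le_of_dvd (by norm_num) hm4
  interval_cases m
  · -- m = 1
    have h2s : (2:ℤ) ∣ s := by
      have h : (2:ℤ) ∣ s^2 := ⟨2 * a * b, by linear_combination hms⟩
      exact Int.prime_two.dvd_of_dvd_pow h
    obtain ⟨s', hs'⟩ := h2s
    rw [hs'] at hms
    have h4 : 4 * (a * b) = 4 * s'^2 := by linear_combination -hms
    exact finish s' t (by linarith) (by linear_combination hm)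
  · -- m = 2
    have h2s : (2:ℤ) ∣ s := by
      have h : (2:ℤ) ∣ s^2 := ⟨a * b, by
        have h2 : 2 * s^2 = 2 * (2 * (a * b)) := by linear_combination hms
        linarith⟩
      exact Int.prime_two.dvd_of_dvd_pow h
    obtain ⟨s', hs'⟩ := h2s
    rw [hs'] at hms
    have h2ab : (2:ℤ) ∣ a * b := ⟨s'^2, by
      have h4 : 4 * (a * b) = 4 * (2 * s'^2) := by linear_combination -hms
      linarith⟩
    have h2 : (2:ℤ) ∣ a ∨ (2:ℤ) ∣ b := (Int.Prime.dvd_mul' (by norm_num) h2ab)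
    rcases h2 with ⟨a', ha'⟩ | ⟨b', hb'⟩
    · have h2b : (2:ℤ) ∣ b := by
        have h : (2:ℤ) ∣ b^2 := ⟨t^2 - 2*a'^2, by rw [ha'] at hm; linear_combination hm⟩
        exact Int.prime_two.dvd_of_dvd_pow h
      have := hcop.isUnit_of_dvd' ⟨a', ha'⟩ h2b
      rw [Int.isUnit_iff] at this; omega
    · have h2a : (2:ℤ) ∣ a := by
        have h : (2:ℤ) ∣ a^2 := ⟨t^2 - 2*b'^2, by rw [hb'] at hm; linear_combination hm⟩
        exact Int.prime_two.dvd_of_dvd_pow h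
      have := hcop.isUnit_of_dvd' h2a ⟨b', hb'⟩
      rw [Int.isUnit_iff] at this; omega
  · -- m = 3
    omega
  · -- m = 4
    have h4 : 4 * (a * b) = 4 * s^2 := by linear_combination -hms
    exact finish s (2 * t) (by linarith) (by linear_combination hm)
end

section
/- For coprime integers m, n with m ≠ ±n and mn ≠ 0, the integer m^2·n^2·(m^4+n^4)^2 does not divide 16·(m^4-n^4)^6. -/
theorem stmt10 (m n : ℤ) (hco : IsCoprime m n) (hmn : m ≠ n) (hmn' : m ≠ -n)
    (hm : m ≠ 0) (hn : n ≠ 0) :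
    ¬ (m^2 * n^2 * (m^4 + n^4)^2 ∣ 16 * (m^4 - n^4)^6) := by
  intro h
  set d : ℤ := m^4 + n^4 with hd
  have hm4 : (1:ℤ) ≤ m^4 := by
    have h0 : 0 < m^4 := by positivity
    linarith
  have hn4 : (1:ℤ) ≤ n^4 := by
    have h0 : 0 < n^4 := by positivity
    linarith
  have hd2 : (2:ℤ) ≤ d := by rw [hd]; linarith
  -- every prime dividing d is 2
  have key : ∀ {p : ℕ}, Nat.Prime p → p ∣ d.natAbs → p = 2 := by
    intro p hp hpd
    by_contra hp2
    have hpz : Prime (p:ℤ) := Nat.prime_iff_prime_int.mp hp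
    have hpdz : (p:ℤ) ∣ d := (Int.natCast_dvd_natCast.mpr hpd).trans (Int.natAbs_dvd.mpr dvd_rfl)
    have h2 : (p:ℤ)^2 ∣ 16 * (m^4 - n^4)^6 :=
      dvd_trans (dvd_trans (pow_dvd_pow_of_dvd hpdz 2) (dvd_mul_left _ _)) h
    have h1 : (p:ℤ) ∣ 16 * (m^4 - n^4)^6 := dvd_trans (dvd_pow_self _ two_ne_zero) h2
    have hX : (p:ℤ) ∣ m^4 - n^4 := by
      rcases hpz.dvd_mul.mp h1 with h16 | hX6
      · exfalso
        have : (p:ℤ) ∣ 2 := by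
          have : (p:ℤ) ∣ 2^4 := by norm_num at h16 ⊢; exact h16
          exact hpz.dvd_of_dvd_pow this
        have := Int.le_of_dvd (by norm_num) this
        have hple : p ≤ 2 := by exact_mod_cast this
        interval_cases p <;> simp_all
      · exact hpz.dvd_of_dvd_pow hX6
    have hne2 : ¬ ((p:ℤ) ∣ 2) := by
      intro hdv
      have := Int.le_of_dvd (by norm_num) hdv
      have hple : p ≤ 2 := by exact_mod_cast this
      interval_cases p <;> simp_all
    have hpm : (p:ℤ) ∣ m := by
      have : (p:ℤ) ∣ 2 * m^4 := by
        have := dvd_add hpdz hX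
        have e : d + (m^4 - n^4) = 2 * m^4 := by ring
        rwa [e] at this
      rcases hpz.dvd_mul.mp this with h2' | h4
      · exact absurd h2' hne2
      · exact hpz.dvd_of_dvd_pow h4
    have hpn : (p:ℤ) ∣ n := by
      have : (p:ℤ) ∣ 2 * n^4 := by
        have := dvd_sub hpdz hX
        have e : d - (m^4 - n^4) = 2 * n^4 := by ring
        rwa [e] at this
      rcases hpz.dvd_mul.mp this with h2' | h4
      · exact absurd h2' hne2
      · exact hpz.dvd_of_dvd_pow h4
    exact hpz.not_unit (hco.isUnit_of_dvd' hpm hpn)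
  have hdpos : d.natAbs ≠ 0 := by
    intro h0
    have := Int.natAbs_eq_zero.mp h0
    omega
  have hpow : d.natAbs = 2 ^ d.natAbs.primeFactorsList.length :=
    Nat.eq_prime_pow_of_unique_prime_dvd hdpos (fun hq hqd => key hq hqd)
  set k := d.natAbs.primeFactorsList.length with hk
  have hdz : d = 2 ^ k := by
    have : (d.natAbs : ℤ) = d := Int.natAbs_of_nonneg (by omega)
    rw [← this, hpow]; push_cast; ring
  -- parity cases
  rcases Int.even_or_odd m with hem | hom
  · rcases Int.even_or_odd n with hen | hon
    · -- both even: contradicts coprimality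
      obtain ⟨a, ha⟩ := hem; obtain ⟨b, hb⟩ := hen
      have : IsUnit (2:ℤ) := hco.isUnit_of_dvd' ⟨a, by omega⟩ ⟨b, by omega⟩
      rw [Int.isUnit_iff] at this; omega
    · -- m even, n odd : d odd
      have hdodd : Odd d := by
        obtain ⟨a, ha⟩ := hem; obtain ⟨b, hb⟩ := hon
        refine ⟨8*a^4 + 8*b^4 + 16*b^3 + 12*b^2 + 4*b, by rw [hd, ha, hb]; ring⟩
      have hk0 : k = 0 := by
        by_contra hk0
        have : (2:ℤ) ∣ d := hdz ▸ dvd_pow_self 2 hk0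
        obtain ⟨c, hc⟩ := hdodd; obtain ⟨e, he⟩ := this; omega
      rw [hk0] at hdz; simp at hdz; omega
  · rcases Int.even_or_odd n with hen | hon
    · -- m odd, n even : d odd, symmetric
      have hdodd : Odd d := by
        obtain ⟨a, ha⟩ := hen; obtain ⟨b, hb⟩ := hom
        refine ⟨8*a^4 + 8*b^4 + 16*b^3 + 12*b^2 + 4*b, by rw [hd, ha, hb]; ring⟩
      have hk0 : k = 0 := by
        by_contra hk0
        have : (2:ℤ) ∣ d := hdz ▸ dvd_pow_self 2 hk0
        obtain ⟨c, hc⟩ := hdodd; obtain ⟨e, he⟩ := this; omega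
      rw [hk0] at hdz; simp at hdz; omega
    · -- both odd : d ≡ 2 mod 16
      have key16 : ∀ x : ℤ, Odd x → (16:ℤ) ∣ x^4 - 1 := by
        rintro x ⟨t, ht⟩
        rcases Int.even_or_odd t with ⟨s, hs⟩ | ⟨s, hs⟩
        · exact ⟨16*s^4+16*s^3+6*s^2+s, by rw [ht, hs]; ring⟩
        · exact ⟨16*s^4+48*s^3+54*s^2+27*s+5, by rw [ht, hs]; ring⟩
      have h16 : (16:ℤ) ∣ d - 2 := by
        obtain ⟨a, ha⟩ := key16 m hom
        obtain ⟨b, hb⟩ := key16 n hon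
        exact ⟨a + b, by rw [hd]; omega⟩
      have hk1 : k = 1 := by
        rcases k with _ | _ | k
        · simp at hdz; omega
        · rfl
        · exfalso
          have : (4:ℤ) ∣ d := by
            rw [hdz]; exact ⟨2^k, by ring⟩
          obtain ⟨c, hc⟩ := this; obtain ⟨e, he⟩ := h16; omega
      rw [hk1] at hdz
      have hd2' : d = 2 := by norm_num at hdz; exact hdz
      have hm1 : m^4 = 1 := by rw [hd] at hd2'; linarith
      have hn1 : n^4 = 1 := by rw [hd] at hd2'; linarith
      have sq1 : ∀ x : ℤ, x^4 = 1 → x = 1 ∨ x = -1 := by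
        intro x hx
        have h2 : x^2 = 1 := by nlinarith [sq_nonneg x, sq_nonneg (x^2 - 1), sq_nonneg (x^2 + 1)]
        have h0 : (x - 1) * (x + 1) = 0 := by ring_nf; omega
        rcases mul_eq_zero.mp h0 with h | h
        · left; omega
        · right; omega
      rcases sq1 m hm1 with h1 | h1 <;> rcases sq1 n hn1 with h2 | h2 <;> omega
end

section
/- Let m, n be coprime integers, and set M = m^8 - 4m^6n^2 + 10m^4n^4 - 4m^2n^6 + n^8 and N = m^8 - 4m^6n^2 - 6m^4n^4 - 4m^2n^6 + n^8. Then gcd(M, N) has no odd prime divisors; i.e., gcd(M, N) is a power of 2. -/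
/-! Since M ≡ n^8 (mod m) and M ≡ m^8 (mod n), M is coprime to mn. As M - N = 16 (mn)^4, every
common divisor of M and N is then coprime to (mn)^4 and divides 16 (mn)^4, hence divides 16. -/

theorem IsCoprime.pow_add_mul_add_pow {R : Type*} [CommRing R] {m n : R} (h : IsCoprime m n)
    (c : R) {k l : ℕ} (hk : k ≠ 0) (hl : l ≠ 0) :
    IsCoprime (m ^ k + m * n * c + n ^ l) (m * n) := by
  obtain ⟨k, rfl⟩ := Nat.exists_eq_add_one_of_ne_zero hk
  obtain ⟨l, rfl⟩ := Nat.exists_eq_add_one_of_ne_zero hl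
  refine IsCoprime.mul_right ?_ ?_
  · convert (h.symm.pow_left (m := l + 1)).add_mul_left_left (m ^ k + n * c) using 1
    ring
  · convert (h.pow_left (m := k + 1)).add_mul_left_left (n ^ l + m * c) using 1
    ring

theorem Int.gcd_dvd_of_sub_eq_mul {a b c u : ℤ} (hac : IsCoprime a c) (h : a - b = u * c) :
    (Int.gcd a b : ℤ) ∣ u := by
  have hgc : IsCoprime (Int.gcd a b : ℤ) c := hac.of_isCoprime_of_dvd_left (Int.gcd_dvd_left a b)
  exact hgc.dvd_of_dvd_mul_right (h ▸ dvd_sub (Int.gcd_dvd_left a b) (Int.gcd_dvd_right a b))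

theorem stmt11 (m n : ℤ) (hco : IsCoprime m n) :
    ∃ s : ℕ,
      Int.gcd (m^8 - 4*m^6*n^2 + 10*m^4*n^4 - 4*m^2*n^6 + n^8)
              (m^8 - 4*m^6*n^2 - 6*m^4*n^4 - 4*m^2*n^6 + n^8) = 2^s := by
  have hM : IsCoprime (m^8 - 4*m^6*n^2 + 10*m^4*n^4 - 4*m^2*n^6 + n^8) ((m * n) ^ 4) := by
    have h := (hco.pow_add_mul_add_pow (m*n*(-4*m^4 + 10*m^2*n^2 - 4*n^4)) (k := 8) (l := 8)
      (by norm_num) (by norm_num)).pow_right (n := 4)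
    ring_nf at h ⊢
    exact h
  have h16 : (Int.gcd (m^8 - 4*m^6*n^2 + 10*m^4*n^4 - 4*m^2*n^6 + n^8)
      (m^8 - 4*m^6*n^2 - 6*m^4*n^4 - 4*m^2*n^6 + n^8) : ℤ) ∣ 2 ^ 4 :=
    Int.gcd_dvd_of_sub_eq_mul hM (by ring)
  obtain ⟨s, -, hs⟩ := (Nat.dvd_prime_pow Nat.prime_two).mp (by exact_mod_cast h16)
  exact ⟨s, hs⟩
end

section
/- Let m, n be coprime integers with M = m^8 - 4m^6n^2 + 10m^4n^4 - 4m^2n^6 + n^8 and N = m^8 - 4m^6n^2 - 6m^4n^4 - 4m^2n^6 + n^8. If m and n are both odd, then gcd(M, N) = 4; if exactly one of m, n is even, then gcd(M, N) = 1. -/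
/-!
Since `M - N = 16 (m n)^4` and `M` is coprime to `m n` (it is `n^8` modulo `m` and `m^8` modulo `n`),
`gcd(M, N) = gcd(M, 16)`. If exactly one of `m, n` is even then `M` is odd. If both are odd then
`m^2 ≡ n^2 ≡ 1 (mod 8)`, and `M`, a quartic form in `m^2, n^2` with coefficient sum `4`, is `≡ 4 (mod 8)`.
-/

theorem Int.gcd_mul_right_cancel_right_of_isCoprime {a c : ℤ} (k : ℤ) (h : IsCoprime c a) :
    Int.gcd a (k * c) = Int.gcd a k := by
  rw [Int.isCoprime_iff_gcd_eq_one, Int.gcd_eq_natAbs] at h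
  simp only [Int.gcd_eq_natAbs, Int.natAbs_mul]
  exact Nat.Coprime.gcd_mul_right_cancel_right _ h

theorem Int.gcd_eq_gcd_of_sub_eq_mul {a b c k : ℤ} (hc : IsCoprime c a) (h : a - b = k * c) :
    Int.gcd a b = Int.gcd a k := by
  rw [← Int.gcd_self_sub_right, h, Int.gcd_mul_right_cancel_right_of_isCoprime k hc]

theorem Int.sq_modEq_one_mod_eight_of_odd {a : ℤ} (ha : Odd a) : a ^ 2 ≡ 1 [ZMOD 8] := by
  obtain ⟨k, rfl⟩ := ha
  obtain ⟨j, hj⟩ := Int.even_mul_succ_self k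
  exact Int.modEq_iff_dvd.mpr ⟨-j, by linear_combination (-4) * hj⟩

theorem Int.gcd_sixteen_of_modEq_four {a : ℤ} (ha : a ≡ 4 [ZMOD 8]) : Int.gcd a 16 = 4 := by
  rw [← Int.gcd_emod]
  have : a % 16 = 4 ∨ a % 16 = 12 := by unfold Int.ModEq at ha; omega
  rcases this with h | h <;> rw [h] <;> rfl

theorem Int.gcd_sixteen_of_odd {a : ℤ} (ha : Odd a) : Int.gcd a 16 = 1 :=
  Int.isCoprime_iff_gcd_eq_one.mp <| by
    simpa using (Int.isCoprime_two_right.mpr ha).pow_right (n := 4)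

namespace OcticPair

def M (m n : ℤ) : ℤ := m^8 - 4*m^6*n^2 + 10*m^4*n^4 - 4*m^2*n^6 + n^8

def N (m n : ℤ) : ℤ := m^8 - 4*m^6*n^2 - 6*m^4*n^4 - 4*m^2*n^6 + n^8

theorem M_sub_N (m n : ℤ) : M m n - N m n = 16 * (m * n) ^ 4 := by
  unfold M N; ring

theorem M_comm (m n : ℤ) : M m n = M n m := by
  unfold M; ring

theorem M_eq_pow_add_mul (m n : ℤ) :
    M m n = n^8 + m * (m^7 - 4*m^5*n^2 + 10*m^3*n^4 - 4*m*n^6) := by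
  unfold M; ring

theorem isCoprime_left_M {m n : ℤ} (h : IsCoprime m n) : IsCoprime m (M m n) := by
  rw [M_eq_pow_add_mul]
  exact h.pow_right.add_mul_left_right _

theorem isCoprime_mul_M {m n : ℤ} (h : IsCoprime m n) : IsCoprime (m * n) (M m n) := by
  refine (isCoprime_left_M h).mul_left ?_
  rw [M_comm]
  exact isCoprime_left_M h.symm

theorem gcd_M_N {m n : ℤ} (h : IsCoprime m n) : Int.gcd (M m n) (N m n) = Int.gcd (M m n) 16 :=
  Int.gcd_eq_gcd_of_sub_eq_mul (isCoprime_mul_M h).pow_left (M_sub_N m n)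

theorem odd_M_of_even_left {m n : ℤ} (hm : Even m) (hn : Odd n) : Odd (M m n) := by
  rw [M_eq_pow_add_mul]
  exact hn.pow.add_even (hm.mul_right _)

theorem M_modEq_four {m n : ℤ} (hm : Odd m) (hn : Odd n) : M m n ≡ 4 [ZMOD 8] := by
  have hm2 := Int.sq_modEq_one_mod_eight_of_odd hm
  have hn2 := Int.sq_modEq_one_mod_eight_of_odd hn
  calc M m n = (m^2)^4 - 4*(m^2)^3*n^2 + 10*(m^2)^2*(n^2)^2 - 4*m^2*(n^2)^3 + (n^2)^4 := by
        unfold M; ring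
    _ ≡ 1^4 - 4*1^3*1 + 10*1^2*1^2 - 4*1*1^3 + 1^4 [ZMOD 8] := by gcongr
    _ = 4 := by norm_num

end OcticPair

open OcticPair in
theorem stmt12 (m n : ℤ) (hco : IsCoprime m n) :
    (Odd m → Odd n →
      Int.gcd (m^8 - 4*m^6*n^2 + 10*m^4*n^4 - 4*m^2*n^6 + n^8)
              (m^8 - 4*m^6*n^2 - 6*m^4*n^4 - 4*m^2*n^6 + n^8) = 4) ∧
    ((Odd m ∧ Even n) ∨ (Even m ∧ Odd n) →
      Int.gcd (m^8 - 4*m^6*n^2 + 10*m^4*n^4 - 4*m^2*n^6 + n^8)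
              (m^8 - 4*m^6*n^2 - 6*m^4*n^4 - 4*m^2*n^6 + n^8) = 1) := by
  change (_ → _ → Int.gcd (M m n) (N m n) = 4) ∧ (_ → Int.gcd (M m n) (N m n) = 1)
  rw [gcd_M_N hco]
  refine ⟨fun hm hn => Int.gcd_sixteen_of_modEq_four (M_modEq_four hm hn), ?_⟩
  rintro (⟨hm, hn⟩ | ⟨hm, hn⟩)
  · exact Int.gcd_sixteen_of_odd (M_comm m n ▸ odd_M_of_even_left hn hm)
  · exact Int.gcd_sixteen_of_odd (odd_M_of_even_left hm hn)
end

section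
/- Let m, n be coprime integers, d = gcd(M, N) where M = m^8 - 4m^6n^2 + 10m^4n^4 - 4m^2n^6 + n^8, N = m^8 - 4m^6n^2 - 6m^4n^4 - 4m^2n^6 + n^8, and write N = d·N' with N' odd. Then gcd(m·n·(m^2+n^2)·(m^4+n^4)·(M/d), N') = 1. -/
private lemma aux13 {a b c : ℤ} (h : IsCoprime a (b + a * c)) : IsCoprime a b := by
  have h2 := h.add_mul_left_right (-c)
  rwa [show b + a * c + a * (-c) = b from by ring] at h2

theorem stmt13 (m n M N d M' N' : ℤ) (hco : IsCoprime m n)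
    (hM : M = m^8 - 4*m^6*n^2 + 10*m^4*n^4 - 4*m^2*n^6 + n^8)
    (hN : N = m^8 - 4*m^6*n^2 - 6*m^4*n^4 - 4*m^2*n^6 + n^8)
    (hd : d = Int.gcd M N) (hM' : M = d * M') (hN' : N = d * N') (hodd : Odd N') :
    IsCoprime (m * n * (m^2 + n^2) * (m^4 + n^4) * M') N' := by
  have hdvd : N' ∣ N := ⟨d, by rw [hN']; ring⟩
  -- coprime to m
  have hm : IsCoprime m N' := by
    have h1 : IsCoprime m (n ^ 8) := hco.pow_right
    have h2 := h1.add_mul_left_right (m^7 - 4*m^5*n^2 - 6*m^3*n^4 - 4*m*n^6)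
    rw [show n^8 + m * (m^7 - 4*m^5*n^2 - 6*m^3*n^4 - 4*m*n^6) =
        m^8 - 4*m^6*n^2 - 6*m^4*n^4 - 4*m^2*n^6 + n^8 from by ring, ← hN] at h2
    exact h2.of_isCoprime_of_dvd_right hdvd
  have hn : IsCoprime n N' := by
    have h1 : IsCoprime n (m ^ 8) := hco.symm.pow_right
    have h2 := h1.add_mul_left_right (n^7 - 4*m^2*n^5 - 6*m^4*n^3 - 4*m^6*n)
    rw [show m^8 + n * (n^7 - 4*m^2*n^5 - 6*m^4*n^3 - 4*m^6*n) =
        m^8 - 4*m^6*n^2 - 6*m^4*n^4 - 4*m^2*n^6 + n^8 from by ring, ← hN] at h2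
    exact h2.of_isCoprime_of_dvd_right hdvd
  -- coprime to 2
  obtain ⟨k, hk⟩ := hodd
  have h2 : IsCoprime N' 2 := ⟨1, -k, by linarith⟩
  have hm8 : IsCoprime N' (m ^ 8) := hm.symm.pow_right
  have hn8 : IsCoprime N' (n ^ 8) := hn.symm.pow_right
  -- coprime to m^2 + n^2
  have hs : IsCoprime N' (m^2 + n^2) := by
    have h4 : IsCoprime N' (4 * m^8) := by
      have := (h2.mul_right h2).mul_right hm8
      rwa [show (2:ℤ) * 2 * m^8 = 4 * m^8 from by ring] at this
    rw [show (4:ℤ) * m^8 = (m^2+n^2) * (3*m^6 + m^4*n^2 + 5*m^2*n^4 - n^6) + N' * d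
        from by rw [show N' * d = N from by rw [hN']; ring, hN]; ring] at h4
    exact (aux13 h4).of_mul_right_left
  -- coprime to m^4 + n^4
  have hq : IsCoprime N' (m^4 + n^4) := by
    have h8 : IsCoprime N' (8 * m^8) := by
      have := ((h2.mul_right h2).mul_right h2).mul_right hm8
      rwa [show (2:ℤ) * 2 * 2 * m^8 = 8 * m^8 from by ring] at this
    rw [show (8:ℤ) * m^8 = (m^4+n^4) * (7*m^4 + 4*m^2*n^2 - n^4) + N' * d
        from by rw [show N' * d = N from by rw [hN']; ring, hN]; ring] at h8
    exact (aux13 h8).of_mul_right_left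
  -- coprime to M'
  have hMc : IsCoprime N' M' := by
    have h16 : IsCoprime N' (16 * (m^4 * n^4)) := by
      have hc16 : IsCoprime N' 16 := by
        have := ((h2.mul_right h2).mul_right h2).mul_right h2
        rwa [show (2:ℤ) * 2 * 2 * 2 = 16 from by norm_num] at this
      exact hc16.mul_right ((hm.symm.pow_right).mul_right (hn.symm.pow_right))
    rw [show (16:ℤ) * (m^4 * n^4) = d * M' + N' * (-d)
        from by rw [← hM', show N' * (-d) = -N from by rw [hN']; ring, hM, hN]; ring] at h16
    exact (aux13 h16).of_mul_right_right
  exact ((((hm.mul_left hn).mul_left hs.symm).mul_left hq.symm).mul_left hMc.symm)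
end

section
/- For every rational k > 0 with k ≠ 1, the rational numbers a = ((k^4+1)^2 - 4k^2(k^2+1)^2)^2, b = 8k(k^2+1)(k^4+1)((k^4+1)^2 - 4k^2(k^2-1)^2), c = ((k^4+1)^2 + 4k^2(k^2-1)^2)^2 satisfy the strict triangle inequalities |a - c| < b < a + c, and the quantity (a+b+c)(-a+b+c)(a-b+c)(a+b-c) is the square of a rational number, i.e., the triangle with sides a, b, c has rational area. -/
lemma no_rat_sqrt_three (q : ℚ) : q ^ 2 ≠ 3 := by
  intro h
  have h3 : Irrational (Real.sqrt 3) := by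
    simpa using (Nat.prime_three).irrational_sqrt
  have hq : ((q : ℝ)) ^ 2 = 3 := by exact_mod_cast h
  have : Real.sqrt 3 = |(q : ℝ)| := by
    rw [← hq, Real.sqrt_sq_eq_abs]
  apply h3
  rw [this, ← Rat.cast_abs]
  exact ⟨|q|, rfl⟩

theorem stmt14 (k : ℚ) (hk : 0 < k) (hk1 : k ≠ 1) :
    let a : ℚ := ((k^4+1)^2 - 4*k^2*(k^2+1)^2)^2
    let b : ℚ := 8*k*(k^2+1)*(k^4+1)*((k^4+1)^2 - 4*k^2*(k^2-1)^2)
    let c : ℚ := ((k^4+1)^2 + 4*k^2*(k^2-1)^2)^2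
    |a - c| < b ∧ b < a + c ∧
    ∃ A : ℚ, (a+b+c)*(-a+b+c)*(a-b+c)*(a+b-c) = A^2 := by
  intro a b c
  have hk0 : k ≠ 0 := ne_of_gt hk
  -- h4 := k^4-2k^3-2k+1 is nonzero for rational k
  have hh4 : k^4 - 2*k^3 - 2*k + 1 ≠ 0 := by
    intro h0
    apply no_rat_sqrt_three ((k^2 - k + 1) / k)
    field_simp
    nlinarith [h0]
  have hh4sq : 0 < (k^4 - 2*k^3 - 2*k + 1)^2 := by positivity
  have hg4 : 0 < k^4 + 2*k^3 + 2*k + 1 := by nlinarith [pow_pos hk 4, pow_pos hk 3]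
  have hkm1 : (0:ℚ) < (k - 1)^2 := by
    have : k - 1 ≠ 0 := sub_ne_zero.mpr hk1
    positivity
  have hK : (0:ℚ) < k^4 + 1 := by positivity
  have hw : (0:ℚ) < (k^2 - 1)^4 + 4*k^4 := by positivity
  have h1 : -a + b + c = 8*k*(k-1)^2*(k^4+1)*(k^4+2*k^3+2*k+1)^2 := by
    simp only [a, b, c]; ring
  have h2 : a + b - c = 8*k*(k+1)^2*(k^4+1)*(k^4-2*k^3-2*k+1)^2 := by
    simp only [a, b, c]; ring
  have h3 : a - b + c = 2*(k^4-2*k^3-2*k+1)^2*((k^2-1)^4+4*k^4) := by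
    simp only [a, b, c]; ring
  have p1 : 0 < -a + b + c := by
    rw [h1]
    have : (0:ℚ) < (k^4+2*k^3+2*k+1)^2 := by positivity
    positivity
  have p2 : 0 < a + b - c := by
    rw [h2]; positivity
  have p3 : 0 < a - b + c := by
    rw [h3]; positivity
  refine ⟨abs_lt.mpr ⟨by linarith, by linarith⟩, by linarith, ?_⟩
  refine ⟨16*k*(k-1)*(k+1)*(k^4+1)*(k^4+2*k^3+2*k+1)^2*(k^4-2*k^3-2*k+1)^2*((k^2-1)^4+4*k^4), ?_⟩
  simp only [a, b, c]; ring
end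

section
/- For every rational k > 0, the expression (a+b+c)(-a+b+c)(a-b+c)(a+b-c), where a = ((k^4+1)^2 - 4k^2(k^2+1)^2)^2, b = 8k(k^2+1)(k^4+1)((k^4+1)^2 - 4k^2(k^2-1)^2), c = ((k^4+1)^2 + 4k^2(k^2-1)^2)^2, is a perfect square in ℚ. -/
theorem stmt15 (k : ℚ) (hk : 0 < k) :
    let a : ℚ := ((k^4+1)^2 - 4*k^2*(k^2+1)^2)^2
    let b : ℚ := 8*k*(k^2+1)*(k^4+1)*((k^4+1)^2 - 4*k^2*(k^2-1)^2)
    let c : ℚ := ((k^4+1)^2 + 4*k^2*(k^2-1)^2)^2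
    ∃ A : ℚ, (a+b+c)*(-a+b+c)*(a-b+c)*(a+b-c) = A^2 := by
  refine ⟨-16*k + 208*k^3 - 944*k^5 + 1904*k^7 - 1616*k^9 - 752*k^11 - 4720*k^13
    + 1584*k^15 - 1584*k^17 + 4720*k^19 + 752*k^21 + 1616*k^23 - 1904*k^25
    + 944*k^27 - 208*k^29 + 16*k^31, ?_⟩
  ring
end

section
/- For coprime positive integers u > v, let a = (u^2+v^2)^2 and c = 8uv(u^2-v^2). Then a and c are positive integers satisfying c < 2a (triangle inequality), so (a, a, c) is an isosceles triangle. Moreover 4a^2 - c^2 is a perfect square and c·sqrt(4a^2 - c^2) is divisible by 4, so the area c·sqrt(4a^2 - c^2)/4 of this triangle is a positive integer. -/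
lemma aux2 (u v s : ℤ) (hco : IsCoprime u v) (hs : s = u - v ∨ s = u + v)
    (h : s^2 = 2*v^2) : False := by
  have h2s : (2:ℤ) ∣ s := by
    have : (2:ℤ) ∣ s^2 := ⟨v^2, h⟩
    exact (Int.Prime.dvd_pow' Nat.prime_two this)
  obtain ⟨k, hk⟩ := h2s
  have hv2 : (2:ℤ) ∣ v := by
    have : v^2 = 2*k^2 := by subst hk; ring_nf at h ⊢; linarith
    exact (Int.Prime.dvd_pow' Nat.prime_two ⟨k^2, this⟩)
  have hu2 : (2:ℤ) ∣ u := by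
    rcases hs with rfl | rfl
    · have : u = 2*k + v := by linarith
      rw [this]; exact Dvd.dvd.add ⟨k, rfl⟩ hv2
    · have : u = 2*k - v := by linarith
      rw [this]; exact dvd_sub ⟨k, rfl⟩ hv2
  have := hco.isUnit_of_dvd' hu2 hv2
  rw [Int.isUnit_iff] at this
  omega

theorem stmt16 (u v : ℤ) (hco : IsCoprime u v) (hv : 0 < v) (huv : v < u) :
    let a : ℤ := (u^2 + v^2)^2
    let c : ℤ := 8*u*v*(u^2 - v^2)
    0 < a ∧ 0 < c ∧ c < 2*a ∧
    (∃ w : ℤ, 0 ≤ w ∧ w^2 = 4*a^2 - c^2) ∧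
    ∃ A : ℤ, 0 < A ∧ (4*A)^2 = c^2 * (4*a^2 - c^2) := by
  intro a c
  have hu : 0 < u := lt_trans hv huv
  have hd : 0 < u^2 - v^2 := by nlinarith
  have hne : (u^2 - v^2)^2 - 4*u^2*v^2 ≠ 0 := by
    intro h
    rcases mul_eq_zero.mp (show (u^2 - v^2 - 2*u*v) * (u^2 - v^2 + 2*u*v) = 0 by nlinarith) with h1 | h1
    · exact aux2 u v (u - v) hco (Or.inl rfl) (by nlinarith)
    · exact aux2 u v (u + v) hco (Or.inr rfl) (by nlinarith)
  have hp : 0 < ((u^2-v^2)^2 - 4*u^2*v^2)^2 := by positivity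
  have key : (2*a - c) * (2*a + c) = 4 * ((u^2-v^2)^2 - 4*u^2*v^2)^2 := by
    simp only [a, c]; ring
  have hapos : (0:ℤ) < a := by positivity
  have hcpos : (0:ℤ) < c := by positivity
  refine ⟨hapos, hcpos, by nlinarith [key, hp], ?_, ?_⟩
  · exact ⟨2 * |(u^2 - v^2)^2 - 4*u^2*v^2|, by positivity, by
      rw [mul_pow, sq_abs]; show _ = 4*a^2 - c^2; simp only [a, c]; ring⟩
  · refine ⟨4*u*v*(u^2 - v^2) * |(u^2 - v^2)^2 - 4*u^2*v^2|, ?_, ?_⟩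
    · have : 0 < |(u^2 - v^2)^2 - 4*u^2*v^2| := abs_pos.mpr hne
      positivity
    · have := sq_abs ((u^2 - v^2)^2 - 4*u^2*v^2)
      show _ = c^2 * (4*a^2 - c^2); simp only [a, c]; nlinarith [sq_abs ((u^2 - v^2)^2 - 4*u^2*v^2)]
end
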